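/- Under the even setup, suppose additionally that no two distinct vertices of G have the same degree strictly greater than n (i.e., β ≤ n). Then the maximum vertex degree of G is not equal to n. -/
import Mathlib


open SimpleGraph Finset

/-- A simple graph `G` contains two vertices of the same degree joined by a path of
length three if there exist four pairwise distinct vertices `a, x, y, b` such that
`ax`, `xy`, `yb` are edges of `G` and `a` and `b` have equal degree. -/
def HasEqPath3 {V : Type*} [Fintype V] [DecidableEq V] (G : SimpleGraph V)
    [DecidableRel G.Adj] : Prop :=
  ∃ a x y b : V, a ≠ x ∧ a ≠ y ∧ a ≠ b ∧ x ≠ y ∧ x ≠ b ∧ y ≠ b ∧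
    G.Adj a x ∧ G.Adj x y ∧ G.Adj y b ∧ G.degree a = G.degree b

section core
variable {V : Type*} [Fintype V] [DecidableEq V]

lemma univ_six {V : Type*} [Fintype V] [DecidableEq V] (h6 : Fintype.card V = 6)
    (a b c d e f : V) (hab : a ≠ b) (hac : a ≠ c) (had : a ≠ d) (hae : a ≠ e) (haf : a ≠ f)
    (hbc : b ≠ c) (hbd : b ≠ d) (hbe : b ≠ e) (hbf : b ≠ f)
    (hcd : c ≠ d) (hce : c ≠ e) (hcf : c ≠ f)
    (hde : d ≠ e) (hdf : d ≠ f) (hef : e ≠ f) (v : V) :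
    v = a ∨ v = b ∨ v = c ∨ v = d ∨ v = e ∨ v = f := by
  have hseq : ({a, b, c, d, e, f} : Finset V) = univ := by
    apply Finset.eq_univ_of_card
    rw [h6]
    rw [Finset.card_insert_of_notMem (by simp [hab, hac, had, hae, haf]),
        Finset.card_insert_of_notMem (by simp [hbc, hbd, hbe, hbf]),
        Finset.card_insert_of_notMem (by simp [hcd, hce, hcf]),
        Finset.card_insert_of_notMem (by simp [hde, hdf]),
        Finset.card_insert_of_notMem (by simp [hef]),
        Finset.card_singleton]
  have hv : v ∈ ({a, b, c, d, e, f} : Finset V) := hseq ▸ Finset.mem_univ v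
  simpa using hv

lemma core (n : ℕ) (hn : 3 ≤ n) (G : SimpleGraph V) [DecidableRel G.Adj]
    (hcard : Fintype.card V = 2 * n)
    (hedges : n ^ 2 - 1 ≤ G.edgeFinset.card)
    (hdeg : ∀ v, G.degree v ≤ n) : HasEqPath3 G := by
  classical
  have hsum : ∑ v, G.degree v = 2 * G.edgeFinset.card := G.sum_degrees_eq_twice_card_edges
  -- total deficiency at most 2
  have hdef : ∑ v : V, (n - G.degree v) ≤ 2 := by
    have h1 : ∑ v : V, (n - G.degree v) + ∑ v, G.degree v = ∑ v : V, n := by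
      rw [← Finset.sum_add_distrib]
      exact Finset.sum_congr rfl fun v _ => Nat.sub_add_cancel (hdeg v)
    have h2 : ∑ v : V, n = 2 * n ^ 2 := by
      rw [Finset.sum_const, Finset.card_univ, hcard, smul_eq_mul]; ring
    have h3 : n ^ 2 ≤ G.edgeFinset.card + 1 := by omega
    omega
  have hdeg2 : ∀ v : V, n ≤ G.degree v + 2 := by
    intro v
    have h := Finset.single_le_sum (f := fun v => n - G.degree v)
      (fun i _ => Nat.zero_le _) (Finset.mem_univ v)
    beta_reduce at h
    have := hdeg v
    omega
  have hpairdef : ∀ a b : V, a ≠ b → G.degree a ≠ n → G.degree b ≠ n →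
      G.degree a = n - 1 ∧ G.degree b = n - 1 := by
    intro a b hab ha hb
    have hsub : ({a, b} : Finset V) ⊆ univ := Finset.subset_univ _
    have h := Finset.sum_le_sum_of_subset (f := fun v => n - G.degree v) hsub
    rw [Finset.sum_pair hab] at h
    beta_reduce at h
    have h1 := hdeg a; have h2 := hdeg b
    omega
  have htriple : ∀ a b c : V, a ≠ b → a ≠ c → b ≠ c → G.degree a ≠ n →
      G.degree b ≠ n → G.degree c = n := by
    intro a b c hab hac hbc ha hb
    by_contra hc
    have hsub : ({a, b, c} : Finset V) ⊆ univ := Finset.subset_univ _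
    have h := Finset.sum_le_sum_of_subset (f := fun v => n - G.degree v) hsub
    rw [Finset.sum_insert (by simp [hab, hac]), Finset.sum_pair hbc] at h
    beta_reduce at h
    have h1 := hdeg a; have h2 := hdeg b; have h3 := hdeg c
    omega
  have hTcard : (univ.filter (fun v => ¬ G.degree v = n)).card ≤ 2 := by
    calc (univ.filter (fun v => ¬ G.degree v = n)).card
        = ∑ _v ∈ univ.filter (fun v => ¬ G.degree v = n), 1 := by
          rw [Finset.card_eq_sum_ones]
      _ ≤ ∑ v ∈ univ.filter (fun v => ¬ G.degree v = n), (n - G.degree v) := by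
          apply Finset.sum_le_sum
          intro v hv
          have := (Finset.mem_filter.mp hv).2
          have := hdeg v
          omega
      _ ≤ ∑ v : V, (n - G.degree v) :=
          Finset.sum_le_sum_of_subset (Finset.filter_subset _ _)
      _ ≤ 2 := hdef
  have hScard : 2 * n - 2 ≤ (univ.filter (fun v => G.degree v = n)).card := by
    have h := Finset.card_filter_add_card_filter_not
      (s := (univ : Finset V)) (p := fun v => G.degree v = n)
    rw [Finset.card_univ, hcard] at h
    omega
  -- there is a vertex of degree n with at most one deficient neighbor
  have hstep2 : ∃ x, G.degree x = n ∧
      ((G.neighborFinset x).filter (fun v => ¬ G.degree v = n)).card ≤ 1 := by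
    by_contra hcon
    push_neg at hcon
    have hkey : ∀ x : V, (G.neighborFinset x).filter (fun v => ¬ G.degree v = n)
        = (univ.filter (fun v => ¬ G.degree v = n)).filter (fun t => G.Adj x t) := by
      intro x; ext v
      simp only [Finset.mem_filter, SimpleGraph.mem_neighborFinset, Finset.mem_univ,
        true_and]
      tauto
    have h1 : 2 * (univ.filter (fun v => G.degree v = n)).card ≤
        ∑ x ∈ univ.filter (fun v => G.degree v = n),
          ((univ.filter (fun v => ¬ G.degree v = n)).filter (fun t => G.Adj x t)).card := by
      calc 2 * (univ.filter (fun v => G.degree v = n)).card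
          = ∑ _x ∈ univ.filter (fun v => G.degree v = n), 2 := by
            rw [Finset.sum_const, smul_eq_mul, mul_comm]
        _ ≤ _ := by
            apply Finset.sum_le_sum
            intro x hx
            rw [← hkey]
            exact hcon x (Finset.mem_filter.mp hx).2
    have h2 : ∑ x ∈ univ.filter (fun v => G.degree v = n),
          ((univ.filter (fun v => ¬ G.degree v = n)).filter (fun t => G.Adj x t)).card
        = ∑ t ∈ univ.filter (fun v => ¬ G.degree v = n),
          ((univ.filter (fun v => G.degree v = n)).filter (fun x => G.Adj x t)).card := by
      simp_rw [Finset.card_filter]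
      exact Finset.sum_comm
    have h3 : ∑ t ∈ univ.filter (fun v => ¬ G.degree v = n),
          ((univ.filter (fun v => G.degree v = n)).filter (fun x => G.Adj x t)).card
        ≤ 2 * n := by
      calc ∑ t ∈ univ.filter (fun v => ¬ G.degree v = n),
            ((univ.filter (fun v => G.degree v = n)).filter (fun x => G.Adj x t)).card
          ≤ ∑ _t ∈ univ.filter (fun v => ¬ G.degree v = n), n := by
            apply Finset.sum_le_sum
            intro t _
            have hsub : (univ.filter (fun v => G.degree v = n)).filter (fun x => G.Adj x t)
                ⊆ G.neighborFinset t := by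
              intro x hx
              rw [SimpleGraph.mem_neighborFinset]
              exact ((Finset.mem_filter.mp hx).2).symm
            calc ((univ.filter (fun v => G.degree v = n)).filter (fun x => G.Adj x t)).card
                ≤ (G.neighborFinset t).card := Finset.card_le_card hsub
              _ = G.degree t := G.card_neighborFinset_eq_degree t
              _ ≤ n := hdeg t
        _ = (univ.filter (fun v => ¬ G.degree v = n)).card * n := by
            rw [Finset.sum_const, smul_eq_mul]
        _ ≤ 2 * n := Nat.mul_le_mul_right n hTcard
    omega
  obtain ⟨x, hxdeg, hxT⟩ := hstep2
  have hsplit : ∀ v : V,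
      ((G.neighborFinset v).filter (fun w => G.degree w = n)).card +
      ((G.neighborFinset v).filter (fun w => ¬ G.degree w = n)).card = G.degree v := by
    intro v
    rw [Finset.card_filter_add_card_filter_not, G.card_neighborFinset_eq_degree]
  have hqsub : ∀ v : V, (G.neighborFinset v).filter (fun w => ¬ G.degree w = n)
      ⊆ univ.filter (fun w => ¬ G.degree w = n) := by
    intro v w hw
    exact Finset.mem_filter.mpr ⟨Finset.mem_univ _, (Finset.mem_filter.mp hw).2⟩
  have hPxcard : n - 1 ≤ ((G.neighborFinset x).filter (fun w => G.degree w = n)).card := by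
    have := hsplit x; omega
  obtain ⟨y, hy⟩ := Finset.card_pos.mp
    (show 0 < ((G.neighborFinset x).filter (fun w => G.degree w = n)).card by omega)
  set Px := (G.neighborFinset x).filter (fun w => G.degree w = n) with hPxdef
  set Py := (G.neighborFinset y).filter (fun w => G.degree w = n) with hPydef
  have hxy : G.Adj x y := by
    have := (Finset.mem_filter.mp hy).1; rwa [SimpleGraph.mem_neighborFinset] at this
  have hydeg : G.degree y = n := (Finset.mem_filter.mp hy).2
  have hxPy : x ∈ Py := Finset.mem_filter.mpr
    ⟨(SimpleGraph.mem_neighborFinset _ _ _).mpr hxy.symm, hxdeg⟩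
  have hPyq : ((G.neighborFinset y).filter (fun w => ¬ G.degree w = n)).card ≤ 2 :=
    le_trans (Finset.card_le_card (hqsub y)) hTcard
  have hPycard : n - 2 ≤ Py.card := by
    have h := hsplit y; rw [← hPydef] at h; omega
  have hAcard : n - 2 ≤ (Px.erase y).card := by
    rw [Finset.card_erase_of_mem hy]; omega
  have hBcard : n - 3 ≤ (Py.erase x).card := by
    rw [Finset.card_erase_of_mem hxPy]; omega
  by_cases hmain : ∃ a ∈ Px.erase y, ∃ b ∈ Py.erase x, a ≠ b
  · obtain ⟨a, ha, b, hb, hab⟩ := hmain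
    have hay : a ≠ y := Finset.ne_of_mem_erase ha
    have haPx := Finset.mem_of_mem_erase ha
    have hxa : G.Adj x a := by
      have := (Finset.mem_filter.mp haPx).1; rwa [SimpleGraph.mem_neighborFinset] at this
    have hadeg : G.degree a = n := (Finset.mem_filter.mp haPx).2
    have hbx : b ≠ x := Finset.ne_of_mem_erase hb
    have hbPy := Finset.mem_of_mem_erase hb
    have hyb : G.Adj y b := by
      have := (Finset.mem_filter.mp hbPy).1; rwa [SimpleGraph.mem_neighborFinset] at this
    have hbdeg : G.degree b = n := (Finset.mem_filter.mp hbPy).2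
    exact ⟨a, x, y, b, hxa.ne', hay, hab, hxy.ne, hbx.symm, hyb.ne, hxa.symm, hxy, hyb,
      by rw [hadeg, hbdeg]⟩
  · push_neg at hmain
    have hA : (Px.erase y).Nonempty := Finset.card_pos.mp (by omega)
    obtain ⟨c, hc⟩ := hA
    have hcy : c ≠ y := Finset.ne_of_mem_erase hc
    have hcPx := Finset.mem_of_mem_erase hc
    have hxc : G.Adj x c := by
      have := (Finset.mem_filter.mp hcPx).1; rwa [SimpleGraph.mem_neighborFinset] at this
    have hcdeg : G.degree c = n := (Finset.mem_filter.mp hcPx).2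
    by_cases hB : (Py.erase x).Nonempty
    · obtain ⟨b0, hb0⟩ := hB
      have hcB : c ∈ Py.erase x := by
        have := hmain c hc b0 hb0; rwa [this]
      have hcx : c ≠ x := Finset.ne_of_mem_erase hcB
      have hcPy := Finset.mem_of_mem_erase hcB
      have hyc : G.Adj y c := by
        have := (Finset.mem_filter.mp hcPy).1; rwa [SimpleGraph.mem_neighborFinset] at this
      have hAsub : Px.erase y ⊆ {c} := fun a ha =>
        Finset.mem_singleton.mpr (hmain a ha c hcB)
      have hBsub : Py.erase x ⊆ {c} := fun b hb =>
        Finset.mem_singleton.mpr ((hmain c hc b hb).symm)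
      have hn3 : n = 3 := by
        have := Finset.card_le_card hAsub
        rw [Finset.card_singleton] at this
        omega
      have hPxe : Px = {y, c} := by
        apply Finset.Subset.antisymm
        · intro a ha
          by_cases hay : a = y
          · simp [hay]
          · have : a ∈ Px.erase y := Finset.mem_erase.mpr ⟨hay, ha⟩
            simp [Finset.mem_singleton.mp (hAsub this)]
        · intro a ha
          rcases Finset.mem_insert.mp ha with h | h
          · rwa [h]
          · rw [Finset.mem_singleton.mp h]; exact hcPx
      have hPye : Py = {x, c} := by
        apply Finset.Subset.antisymm
        · intro a ha
          by_cases hax : a = x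
          · simp [hax]
          · have : a ∈ Py.erase x := Finset.mem_erase.mpr ⟨hax, ha⟩
            simp [Finset.mem_singleton.mp (hBsub this)]
        · intro a ha
          rcases Finset.mem_insert.mp ha with h | h
          · rwa [h]
          · rw [Finset.mem_singleton.mp h]; exact hcPy
      have hPxcard2 : Px.card = 2 := by
        rw [hPxe, Finset.card_insert_of_notMem (by simpa using Ne.symm hcy),
          Finset.card_singleton]
      have hQx1 : ((G.neighborFinset x).filter (fun w => ¬ G.degree w = n)).card = 1 := by
        have h := hsplit x; rw [← hPxdef, hPxcard2] at h; omega
      obtain ⟨t, htq⟩ := Finset.card_eq_one.mp hQx1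
      have htmem : t ∈ (G.neighborFinset x).filter (fun w => ¬ G.degree w = n) := by
        rw [htq]; simp
      have hxt : G.Adj x t := by
        have := (Finset.mem_filter.mp htmem).1; rwa [SimpleGraph.mem_neighborFinset] at this
      have htdeg : G.degree t ≠ n := (Finset.mem_filter.mp htmem).2
      have hPycard2 : Py.card = 2 := by
        rw [hPye, Finset.card_insert_of_notMem (by simpa using Ne.symm hcx),
          Finset.card_singleton]
      have hQy1 : ((G.neighborFinset y).filter (fun w => ¬ G.degree w = n)).card = 1 := by
        have h := hsplit y; rw [← hPydef, hPycard2] at h; omega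
      obtain ⟨t', ht'q⟩ := Finset.card_eq_one.mp hQy1
      have ht'mem : t' ∈ (G.neighborFinset y).filter (fun w => ¬ G.degree w = n) := by
        rw [ht'q]; simp
      have hyt' : G.Adj y t' := by
        have := (Finset.mem_filter.mp ht'mem).1; rwa [SimpleGraph.mem_neighborFinset] at this
      have ht'deg : G.degree t' ≠ n := (Finset.mem_filter.mp ht'mem).2
      by_cases htt : t = t'
      · -- the hard sub-case
        have hyt : G.Adj y t := by rw [htt]; exact hyt'
        have htx : t ≠ x := hxt.ne'
        have hty : t ≠ y := hyt.ne'
        have hsubt : ({x, y} : Finset V) ⊆ G.neighborFinset t := by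
          intro v hv
          rcases Finset.mem_insert.mp hv with h | h
          · rw [h, SimpleGraph.mem_neighborFinset]; exact hxt.symm
          · rw [Finset.mem_singleton.mp h, SimpleGraph.mem_neighborFinset]; exact hyt.symm
        have h2xy : ({x, y} : Finset V).card = 2 := by
          rw [Finset.card_insert_of_notMem (by simpa using hxy.ne), Finset.card_singleton]
        have hdegt2 : G.degree t = 2 := by
          have h := Finset.card_le_card hsubt
          rw [h2xy, G.card_neighborFinset_eq_degree] at h
          have := hdeg t
          omega
        have hNt : G.neighborFinset t = {x, y} := by
          symm
          apply Finset.eq_of_subset_of_card_le hsubt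
          rw [G.card_neighborFinset_eq_degree, hdegt2, h2xy]
        have hNx : G.neighborFinset x = {y, c, t} := by
          have h := Finset.filter_union_filter_not_eq
            (fun w => G.degree w = n) (G.neighborFinset x)
          rw [← hPxdef, hPxe, htq] at h
          rw [← h]
          ext v; simp [or_assoc]
        have hNy : G.neighborFinset y = {x, c, t} := by
          have h := Finset.filter_union_filter_not_eq
            (fun w => G.degree w = n) (G.neighborFinset y)
          rw [← hPydef, hPye, ht'q, ← htt] at h
          rw [← h]
          ext v; simp [or_assoc]
        have hwcard : 1 ≤ ((G.neighborFinset c) \ {x, y}).card := by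
          have h := Finset.le_card_sdiff ({x, y} : Finset V) (G.neighborFinset c)
          rw [h2xy, G.card_neighborFinset_eq_degree, hcdeg] at h
          omega
        obtain ⟨w, hw⟩ := Finset.card_pos.mp hwcard
        have hwNc : w ∈ G.neighborFinset c := (Finset.mem_sdiff.mp hw).1
        have hcw : G.Adj c w := by rwa [SimpleGraph.mem_neighborFinset] at hwNc
        have hwxy : ¬ (w = x ∨ w = y) := by
          have := (Finset.mem_sdiff.mp hw).2; simpa using this
        have hwx : w ≠ x := fun h => hwxy (Or.inl h)
        have hwy : w ≠ y := fun h => hwxy (Or.inr h)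
        have hwt : w ≠ t := by
          intro h
          have hmem : c ∈ G.neighborFinset t := by
            rw [SimpleGraph.mem_neighborFinset]; exact (h ▸ hcw).symm
          rw [hNt] at hmem
          rcases Finset.mem_insert.mp hmem with h' | h'
          · exact hcx h'
          · exact hcy (Finset.mem_singleton.mp h')
        by_cases hwdeg : G.degree w = n
        · exact ⟨w, c, x, y, hcw.ne', hwx, hwy, hcx, hcy, hxy.ne, hcw.symm, hxc.symm, hxy,
            by rw [hwdeg, hydeg]⟩
        · have hdegw : G.degree w = 2 := by
            have := (hpairdef t w (Ne.symm hwt) htdeg hwdeg).2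
            omega
          have hNc : G.neighborFinset c = {x, y, w} := by
            symm
            apply Finset.eq_of_subset_of_card_le
            · intro v hv
              rw [SimpleGraph.mem_neighborFinset]
              rcases Finset.mem_insert.mp hv with h | h
              · rw [h]; exact hxc.symm
              · rcases Finset.mem_insert.mp h with h' | h'
                · rw [h']; exact hyc.symm
                · rw [Finset.mem_singleton.mp h']; exact hcw
            · rw [G.card_neighborFinset_eq_degree, hcdeg, hn3]
              rw [Finset.card_insert_of_notMem (by simp [hxy.ne, Ne.symm hwx]),
                Finset.card_insert_of_notMem (by simp [Ne.symm hwy]),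
                Finset.card_singleton]
          have hzcard : 1 ≤ ((G.neighborFinset w).erase c).card := by
            rw [Finset.card_erase_of_mem
              (by rw [SimpleGraph.mem_neighborFinset]; exact hcw.symm)]
            rw [G.card_neighborFinset_eq_degree, hdegw]
          obtain ⟨z, hz'⟩ := Finset.card_pos.mp hzcard
          have hzc : z ≠ c := Finset.ne_of_mem_erase hz'
          have hwz : G.Adj w z := by
            have := Finset.mem_of_mem_erase hz'
            rwa [SimpleGraph.mem_neighborFinset] at this
          have hzw : z ≠ w := hwz.ne'
          have hzx : z ≠ x := by
            intro h
            have hmem : w ∈ G.neighborFinset x := by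
              rw [SimpleGraph.mem_neighborFinset]; exact (h ▸ hwz).symm
            rw [hNx] at hmem
            rcases Finset.mem_insert.mp hmem with h' | h'
            · exact hwy h'
            · rcases Finset.mem_insert.mp h' with h'' | h''
              · exact hcw.ne' h''
              · exact hwt (Finset.mem_singleton.mp h'')
          have hzy : z ≠ y := by
            intro h
            have hmem : w ∈ G.neighborFinset y := by
              rw [SimpleGraph.mem_neighborFinset]; exact (h ▸ hwz).symm
            rw [hNy] at hmem
            rcases Finset.mem_insert.mp hmem with h' | h'
            · exact hwx h'
            · rcases Finset.mem_insert.mp h' with h'' | h''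
              · exact hcw.ne' h''
              · exact hwt (Finset.mem_singleton.mp h'')
          have hzt : z ≠ t := by
            intro h
            have hmem : w ∈ G.neighborFinset t := by
              rw [SimpleGraph.mem_neighborFinset]; exact (h ▸ hwz).symm
            rw [hNt] at hmem
            rcases Finset.mem_insert.mp hmem with h' | h'
            · exact hwx h'
            · exact hwy (Finset.mem_singleton.mp h')
          have hzdeg : G.degree z = n :=
            htriple t w z (Ne.symm hwt) (Ne.symm hzt) (Ne.symm hzw) htdeg hwdeg
          have hcard6 : Fintype.card V = 6 := by rw [hcard, hn3]
          have hct : c ≠ t := fun h => htdeg (by rw [← h]; exact hcdeg)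
          have huniv := univ_six hcard6 x y c t w z hxy.ne (Ne.symm hcx) hxt.ne
            (Ne.symm hwx) (Ne.symm hzx) (Ne.symm hcy) hyt.ne (Ne.symm hwy) (Ne.symm hzy)
            hct hcw.ne (Ne.symm hzc) (Ne.symm hwt) (Ne.symm hzt) hwz.ne
          have hNzsub : G.neighborFinset z ⊆ {w} := by
            intro v hv
            have hzv : G.Adj z v := by rwa [SimpleGraph.mem_neighborFinset] at hv
            rcases huniv v with h | h | h | h | h | h
            · exfalso
              have hmem : z ∈ G.neighborFinset x := by
                rw [SimpleGraph.mem_neighborFinset]; exact (h ▸ hzv).symm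
              rw [hNx] at hmem
              rcases Finset.mem_insert.mp hmem with h' | h'
              · exact hzy h'
              · rcases Finset.mem_insert.mp h' with h'' | h''
                · exact hzc h''
                · exact hzt (Finset.mem_singleton.mp h'')
            · exfalso
              have hmem : z ∈ G.neighborFinset y := by
                rw [SimpleGraph.mem_neighborFinset]; exact (h ▸ hzv).symm
              rw [hNy] at hmem
              rcases Finset.mem_insert.mp hmem with h' | h'
              · exact hzx h'
              · rcases Finset.mem_insert.mp h' with h'' | h''
                · exact hzc h''
                · exact hzt (Finset.mem_singleton.mp h'')
            · exfalso
              have hmem : z ∈ G.neighborFinset c := by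
                rw [SimpleGraph.mem_neighborFinset]; exact (h ▸ hzv).symm
              rw [hNc] at hmem
              rcases Finset.mem_insert.mp hmem with h' | h'
              · exact hzx h'
              · rcases Finset.mem_insert.mp h' with h'' | h''
                · exact hzy h''
                · exact hzw (Finset.mem_singleton.mp h'')
            · exfalso
              have hmem : z ∈ G.neighborFinset t := by
                rw [SimpleGraph.mem_neighborFinset]; exact (h ▸ hzv).symm
              rw [hNt] at hmem
              rcases Finset.mem_insert.mp hmem with h' | h'
              · exact hzx h'
              · exact hzy (Finset.mem_singleton.mp h')
            · rw [h]; exact Finset.mem_singleton_self w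
            · exfalso; exact G.irrefl (h ▸ hzv)
          exfalso
          have hle := Finset.card_le_card hNzsub
          rw [G.card_neighborFinset_eq_degree, Finset.card_singleton] at hle
          omega
      · have hdegs := hpairdef t t' htt htdeg ht'deg
        refine ⟨t, x, y, t', hxt.ne', ?_, htt, hxy.ne, ?_, hyt'.ne, hxt.symm, hxy, hyt', ?_⟩
        · intro h; rw [h] at htdeg; exact htdeg hydeg
        · intro h; rw [← h] at ht'deg; exact ht'deg hxdeg
        · rw [hdegs.1, hdegs.2]
    · -- B is empty
      have hBe : Py.erase x = ∅ := Finset.not_nonempty_iff_eq_empty.mp hB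
      have hPye : Py = {x} := by
        apply Finset.Subset.antisymm
        · intro a ha
          by_cases hax : a = x
          · simp [hax]
          · exfalso
            have : a ∈ Py.erase x := Finset.mem_erase.mpr ⟨hax, ha⟩
            rw [hBe] at this
            exact absurd this (Finset.notMem_empty a)
        · intro a ha; rw [Finset.mem_singleton.mp ha]; exact hxPy
      have hQy2 : ((G.neighborFinset y).filter (fun w => ¬ G.degree w = n)).card = n - 1 := by
        have h := hsplit y
        rw [← hPydef, hPye, Finset.card_singleton] at h
        omega
      have hn3 : n = 3 := by
        have h := Finset.card_le_card (hqsub y)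
        rw [hQy2] at h
        have := hTcard
        omega
      have hQy2' : ((G.neighborFinset y).filter (fun w => ¬ G.degree w = n)).card = 2 := by
        rw [hQy2, hn3]
      obtain ⟨t1, t2, ht12, hQye⟩ := Finset.card_eq_two.mp hQy2'
      have ht1mem : t1 ∈ (G.neighborFinset y).filter (fun w => ¬ G.degree w = n) := by
        rw [hQye]; simp
      have ht2mem : t2 ∈ (G.neighborFinset y).filter (fun w => ¬ G.degree w = n) := by
        rw [hQye]; simp
      have hyt1 : G.Adj y t1 := by
        have := (Finset.mem_filter.mp ht1mem).1; rwa [SimpleGraph.mem_neighborFinset] at this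
      have hyt2 : G.Adj y t2 := by
        have := (Finset.mem_filter.mp ht2mem).1; rwa [SimpleGraph.mem_neighborFinset] at this
      have ht1deg : G.degree t1 ≠ n := (Finset.mem_filter.mp ht1mem).2
      have ht2deg : G.degree t2 ≠ n := (Finset.mem_filter.mp ht2mem).2
      have hdegt12 := hpairdef t1 t2 ht12 ht1deg ht2deg
      have hdt1 : G.degree t1 = 2 := by have := hdegt12.1; omega
      have hdt2 : G.degree t2 = 2 := by have := hdegt12.2; omega
      have hTeq : univ.filter (fun v => ¬ G.degree v = n) = {t1, t2} := by
        symm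
        apply Finset.eq_of_subset_of_card_le
        · intro v hv
          rcases Finset.mem_insert.mp hv with h | h
          · rw [h]; exact Finset.mem_filter.mpr ⟨Finset.mem_univ _, ht1deg⟩
          · rw [Finset.mem_singleton.mp h]
            exact Finset.mem_filter.mpr ⟨Finset.mem_univ _, ht2deg⟩
        · rw [Finset.card_insert_of_notMem (by simpa using ht12), Finset.card_singleton]
          exact hTcard
      by_cases hxq : ((G.neighborFinset x).filter (fun w => ¬ G.degree w = n)).Nonempty
      · obtain ⟨t, ht⟩ := hxq
        have hxt : G.Adj x t := by
          have := (Finset.mem_filter.mp ht).1; rwa [SimpleGraph.mem_neighborFinset] at this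
        have htdeg : G.degree t ≠ n := (Finset.mem_filter.mp ht).2
        have htT : t ∈ ({t1, t2} : Finset V) := by
          rw [← hTeq]; exact Finset.mem_filter.mpr ⟨Finset.mem_univ _, htdeg⟩
        rcases Finset.mem_insert.mp htT with h | h
        · subst h
          refine ⟨t, x, y, t2, hxt.ne', hyt1.ne', ht12, hxy.ne, ?_, hyt2.ne, hxt.symm, hxy,
            hyt2, by rw [hdt1, hdt2]⟩
          intro h; exact ht2deg (h ▸ hxdeg)
        · rw [Finset.mem_singleton.mp h] at hxt htdeg
          refine ⟨t2, x, y, t1, hxt.ne', hyt2.ne', Ne.symm ht12, hxy.ne, ?_, hyt1.ne,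
            hxt.symm, hxy, hyt1, by rw [hdt1, hdt2]⟩
          intro h; exact ht1deg (h ▸ hxdeg)
      · have hQxe : (G.neighborFinset x).filter (fun w => ¬ G.degree w = n) = ∅ :=
          Finset.not_nonempty_iff_eq_empty.mp hxq
        have hNxP : G.neighborFinset x = Px := by
          have h := Finset.filter_union_filter_not_eq
            (fun w => G.degree w = n) (G.neighborFinset x)
          rw [← hPxdef, hQxe, Finset.union_empty] at h
          exact h.symm
        have hPxcard3 : Px.card = 3 := by
          have h := G.card_neighborFinset_eq_degree x
          rw [hNxP, hxdeg, hn3] at h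
          exact h
        have hucard : 1 ≤ (Px \ {y, c}).card := by
          have h := Finset.le_card_sdiff ({y, c} : Finset V) Px
          have h2 : ({y, c} : Finset V).card ≤ 2 := by
            apply le_trans (Finset.card_insert_le _ _); simp
          omega
        obtain ⟨u, hu⟩ := Finset.card_pos.mp hucard
        have huPx : u ∈ Px := (Finset.mem_sdiff.mp hu).1
        have hxu : G.Adj x u := by
          have := (Finset.mem_filter.mp huPx).1; rwa [SimpleGraph.mem_neighborFinset] at this
        have hudeg : G.degree u = n := (Finset.mem_filter.mp huPx).2
        have huyc : ¬ (u = y ∨ u = c) := by simpa using (Finset.mem_sdiff.mp hu).2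
        have huy : u ≠ y := fun h => huyc (Or.inl h)
        have huc : u ≠ c := fun h => huyc (Or.inr h)
        have hNy : G.neighborFinset y = {x, t1, t2} := by
          have h := Finset.filter_union_filter_not_eq
            (fun w => G.degree w = n) (G.neighborFinset y)
          rw [← hPydef, hPye, hQye] at h
          rw [← h]
          ext v
          simp only [Finset.mem_union, Finset.mem_insert, Finset.mem_singleton]
        have hxt1 : x ≠ t1 := fun h => ht1deg (h ▸ hxdeg)
        have hxt2 : x ≠ t2 := fun h => ht2deg (h ▸ hxdeg)
        have hct1 : c ≠ t1 := fun h => ht1deg (h ▸ hcdeg)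
        have hct2 : c ≠ t2 := fun h => ht2deg (h ▸ hcdeg)
        have hut1 : u ≠ t1 := fun h => ht1deg (h ▸ hudeg)
        have hut2 : u ≠ t2 := fun h => ht2deg (h ▸ hudeg)
        have hcard6 : Fintype.card V = 6 := by rw [hcard, hn3]
        have huniv := univ_six hcard6 x y c u t1 t2 hxy.ne hxc.ne hxu.ne hxt1 hxt2
          (Ne.symm hcy) (Ne.symm huy) hyt1.ne hyt2.ne (Ne.symm huc) hct1 hct2
          hut1 hut2 ht12
        have hNcsub : G.neighborFinset c ⊆ {x, u, t1, t2} := by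
          intro v hv
          have hcv : G.Adj c v := by rwa [SimpleGraph.mem_neighborFinset] at hv
          rcases huniv v with h | h | h | h | h | h
          · simp [h]
          · exfalso
            have hmem : c ∈ G.neighborFinset y := by
              rw [SimpleGraph.mem_neighborFinset]; exact (h ▸ hcv).symm
            rw [hNy] at hmem
            rcases Finset.mem_insert.mp hmem with h' | h'
            · exact hxc.ne' h'
            · rcases Finset.mem_insert.mp h' with h'' | h''
              · exact hct1 h''
              · exact hct2 (Finset.mem_singleton.mp h'')
          · exact absurd (h ▸ hcv) (G.irrefl)
          · simp [h]
          · simp [h]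
          · simp [h]
        have hNusub : G.neighborFinset u ⊆ {x, c, t1, t2} := by
          intro v hv
          have huv : G.Adj u v := by rwa [SimpleGraph.mem_neighborFinset] at hv
          rcases huniv v with h | h | h | h | h | h
          · simp [h]
          · exfalso
            have hmem : u ∈ G.neighborFinset y := by
              rw [SimpleGraph.mem_neighborFinset]; exact (h ▸ huv).symm
            rw [hNy] at hmem
            rcases Finset.mem_insert.mp hmem with h' | h'
            · exact hxu.ne' h'
            · rcases Finset.mem_insert.mp h' with h'' | h''
              · exact hut1 h''
              · exact hut2 (Finset.mem_singleton.mp h'')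
          · simp [h]
          · exact absurd (h ▸ huv) (G.irrefl)
          · simp [h]
          · simp [h]
        have hdegc3 : G.degree c = 3 := by rw [hcdeg, hn3]
        have hdegu3 : G.degree u = 3 := by rw [hudeg, hn3]
        by_cases h1 : G.Adj c u <;> by_cases h2 : G.Adj c t1 <;> by_cases h3 : G.Adj c t2
        · -- c ~ u, t1, t2 : degree of c would be ≥ 4
          exfalso
          have hsub4 : ({x, u, t1, t2} : Finset V) ⊆ G.neighborFinset c := by
            intro v hv
            rw [SimpleGraph.mem_neighborFinset]
            rcases Finset.mem_insert.mp hv with h | h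
            · rw [h]; exact hxc.symm
            · rcases Finset.mem_insert.mp h with h' | h'
              · rw [h']; exact h1
              · rcases Finset.mem_insert.mp h' with h'' | h''
                · rw [h'']; exact h2
                · rw [Finset.mem_singleton.mp h'']; exact h3
          have hc4 : ({x, u, t1, t2} : Finset V).card = 4 := by
            rw [Finset.card_insert_of_notMem (by simp [hxu.ne, hxt1, hxt2]),
              Finset.card_insert_of_notMem (by simp [hut1, hut2]),
              Finset.card_insert_of_notMem (by simpa using ht12),
              Finset.card_singleton]
          have h := Finset.card_le_card hsub4
          rw [hc4, G.card_neighborFinset_eq_degree, hdegc3] at h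
          omega
        · -- c ~ u, c ~ t1, ¬ c ~ t2 : path t1 - c - u - t2
          have hNt1 : G.neighborFinset t1 = {y, c} := by
            symm
            apply Finset.eq_of_subset_of_card_le
            · intro v hv
              rw [SimpleGraph.mem_neighborFinset]
              rcases Finset.mem_insert.mp hv with h | h
              · rw [h]; exact hyt1.symm
              · rw [Finset.mem_singleton.mp h]; exact h2.symm
            · rw [G.card_neighborFinset_eq_degree, hdt1,
                Finset.card_insert_of_notMem (by simpa using Ne.symm hcy),
                Finset.card_singleton]
          have hNusub2 : G.neighborFinset u ⊆ {x, c, t2} := by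
            intro v hv
            have huv : G.Adj u v := by rwa [SimpleGraph.mem_neighborFinset] at hv
            have := hNusub hv
            rcases Finset.mem_insert.mp this with h | h
            · simp [h]
            · rcases Finset.mem_insert.mp h with h' | h'
              · simp [h']
              · rcases Finset.mem_insert.mp h' with h'' | h''
                · exfalso
                  have hmem : u ∈ G.neighborFinset t1 := by
                    rw [SimpleGraph.mem_neighborFinset]; exact (h'' ▸ huv).symm
                  rw [hNt1] at hmem
                  rcases Finset.mem_insert.mp hmem with h3' | h3'
                  · exact huy h3'
                  · exact huc (Finset.mem_singleton.mp h3')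
                · simp [h'']
          have hNue : G.neighborFinset u = {x, c, t2} := by
            apply Finset.eq_of_subset_of_card_le hNusub2
            rw [G.card_neighborFinset_eq_degree, hdegu3,
              Finset.card_insert_of_notMem (by simp [hxc.ne, hxt2]),
              Finset.card_insert_of_notMem (by simpa using hct2),
              Finset.card_singleton]
          have hut2' : G.Adj u t2 := by
            have : t2 ∈ G.neighborFinset u := by rw [hNue]; simp
            rwa [SimpleGraph.mem_neighborFinset] at this
          exact ⟨t1, c, u, t2, Ne.symm hct1, Ne.symm hut1, ht12, h1.ne, hct2, hut2,
            h2.symm, h1, hut2', by rw [hdt1, hdt2]⟩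
        · -- c ~ u, ¬ c ~ t1, c ~ t2 : path t2 - c - u - t1
          have hNt2 : G.neighborFinset t2 = {y, c} := by
            symm
            apply Finset.eq_of_subset_of_card_le
            · intro v hv
              rw [SimpleGraph.mem_neighborFinset]
              rcases Finset.mem_insert.mp hv with h | h
              · rw [h]; exact hyt2.symm
              · rw [Finset.mem_singleton.mp h]; exact h3.symm
            · rw [G.card_neighborFinset_eq_degree, hdt2,
                Finset.card_insert_of_notMem (by simpa using Ne.symm hcy),
                Finset.card_singleton]
          have hNusub2 : G.neighborFinset u ⊆ {x, c, t1} := by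
            intro v hv
            have huv : G.Adj u v := by rwa [SimpleGraph.mem_neighborFinset] at hv
            have := hNusub hv
            rcases Finset.mem_insert.mp this with h | h
            · simp [h]
            · rcases Finset.mem_insert.mp h with h' | h'
              · simp [h']
              · rcases Finset.mem_insert.mp h' with h'' | h''
                · simp [h'']
                · exfalso
                  have hmem : u ∈ G.neighborFinset t2 := by
                    rw [SimpleGraph.mem_neighborFinset]
                    exact ((Finset.mem_singleton.mp h'') ▸ huv).symm
                  rw [hNt2] at hmem
                  rcases Finset.mem_insert.mp hmem with h3' | h3'
                  · exact huy h3'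
                  · exact huc (Finset.mem_singleton.mp h3')
          have hNue : G.neighborFinset u = {x, c, t1} := by
            apply Finset.eq_of_subset_of_card_le hNusub2
            rw [G.card_neighborFinset_eq_degree, hdegu3,
              Finset.card_insert_of_notMem (by simp [hxc.ne, hxt1]),
              Finset.card_insert_of_notMem (by simpa using hct1),
              Finset.card_singleton]
          have hut1' : G.Adj u t1 := by
            have : t1 ∈ G.neighborFinset u := by rw [hNue]; simp
            rwa [SimpleGraph.mem_neighborFinset] at this
          exact ⟨t2, c, u, t1, Ne.symm hct2, Ne.symm hut2, Ne.symm ht12, h1.ne, hct1, hut1,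
            h3.symm, h1, hut1', by rw [hdt1, hdt2]⟩
        · -- c ~ u only : deg c ≤ 2
          exfalso
          have hsub : G.neighborFinset c ⊆ {x, u} := by
            intro v hv
            have hcv : G.Adj c v := by rwa [SimpleGraph.mem_neighborFinset] at hv
            have := hNcsub hv
            rcases Finset.mem_insert.mp this with h | h
            · simp [h]
            · rcases Finset.mem_insert.mp h with h' | h'
              · simp [h']
              · rcases Finset.mem_insert.mp h' with h'' | h''
                · exact absurd (h'' ▸ hcv) h2
                · exact absurd ((Finset.mem_singleton.mp h'') ▸ hcv) h3
          have h := Finset.card_le_card hsub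
          have h2' : ({x, u} : Finset V).card ≤ 2 := by
            apply le_trans (Finset.card_insert_le _ _); simp
          rw [G.card_neighborFinset_eq_degree, hdegc3] at h
          omega
        · -- ¬ c ~ u, c ~ t1, c ~ t2 : u ends up isolated
          exfalso
          have hNt1 : G.neighborFinset t1 = {y, c} := by
            symm
            apply Finset.eq_of_subset_of_card_le
            · intro v hv
              rw [SimpleGraph.mem_neighborFinset]
              rcases Finset.mem_insert.mp hv with h | h
              · rw [h]; exact hyt1.symm
              · rw [Finset.mem_singleton.mp h]; exact h2.symm
            · rw [G.card_neighborFinset_eq_degree, hdt1,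
                Finset.card_insert_of_notMem (by simpa using Ne.symm hcy),
                Finset.card_singleton]
          have hNt2 : G.neighborFinset t2 = {y, c} := by
            symm
            apply Finset.eq_of_subset_of_card_le
            · intro v hv
              rw [SimpleGraph.mem_neighborFinset]
              rcases Finset.mem_insert.mp hv with h | h
              · rw [h]; exact hyt2.symm
              · rw [Finset.mem_singleton.mp h]; exact h3.symm
            · rw [G.card_neighborFinset_eq_degree, hdt2,
                Finset.card_insert_of_notMem (by simpa using Ne.symm hcy),
                Finset.card_singleton]
          have hNce : G.neighborFinset c = {x, t1, t2} := by
            symm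
            apply Finset.eq_of_subset_of_card_le
            · intro v hv
              rw [SimpleGraph.mem_neighborFinset]
              rcases Finset.mem_insert.mp hv with h | h
              · rw [h]; exact hxc.symm
              · rcases Finset.mem_insert.mp h with h' | h'
                · rw [h']; exact h2
                · rw [Finset.mem_singleton.mp h']; exact h3
            · rw [G.card_neighborFinset_eq_degree, hdegc3,
                Finset.card_insert_of_notMem (by simp [hxt1, hxt2]),
                Finset.card_insert_of_notMem (by simpa using ht12),
                Finset.card_singleton]
          have hsub : G.neighborFinset u ⊆ {x} := by
            intro v hv
            have huv : G.Adj u v := by rwa [SimpleGraph.mem_neighborFinset] at hv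
            have := hNusub hv
            rcases Finset.mem_insert.mp this with h | h
            · simp [h]
            · exfalso
              rcases Finset.mem_insert.mp h with h' | h'
              · have hmem : u ∈ G.neighborFinset c := by
                  rw [SimpleGraph.mem_neighborFinset]; exact (h' ▸ huv).symm
                rw [hNce] at hmem
                rcases Finset.mem_insert.mp hmem with h3' | h3'
                · exact hxu.ne' h3'
                · rcases Finset.mem_insert.mp h3' with h4 | h4
                  · exact hut1 h4
                  · exact hut2 (Finset.mem_singleton.mp h4)
              · rcases Finset.mem_insert.mp h' with h'' | h''
                · have hmem : u ∈ G.neighborFinset t1 := by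
                    rw [SimpleGraph.mem_neighborFinset]; exact (h'' ▸ huv).symm
                  rw [hNt1] at hmem
                  rcases Finset.mem_insert.mp hmem with h3' | h3'
                  · exact huy h3'
                  · exact huc (Finset.mem_singleton.mp h3')
                · have hmem : u ∈ G.neighborFinset t2 := by
                    rw [SimpleGraph.mem_neighborFinset]
                    exact ((Finset.mem_singleton.mp h'') ▸ huv).symm
                  rw [hNt2] at hmem
                  rcases Finset.mem_insert.mp hmem with h3' | h3'
                  · exact huy h3'
                  · exact huc (Finset.mem_singleton.mp h3')
          have h := Finset.card_le_card hsub
          rw [G.card_neighborFinset_eq_degree, hdegu3, Finset.card_singleton] at h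
          omega
        · -- only c ~ t1 : deg c ≤ 2
          exfalso
          have hsub : G.neighborFinset c ⊆ {x, t1} := by
            intro v hv
            have hcv : G.Adj c v := by rwa [SimpleGraph.mem_neighborFinset] at hv
            have := hNcsub hv
            rcases Finset.mem_insert.mp this with h | h
            · simp [h]
            · rcases Finset.mem_insert.mp h with h' | h'
              · exact absurd (h' ▸ hcv) h1
              · rcases Finset.mem_insert.mp h' with h'' | h''
                · simp [h'']
                · exact absurd ((Finset.mem_singleton.mp h'') ▸ hcv) h3
          have h := Finset.card_le_card hsub
          have h2' : ({x, t1} : Finset V).card ≤ 2 := by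
            apply le_trans (Finset.card_insert_le _ _); simp
          rw [G.card_neighborFinset_eq_degree, hdegc3] at h
          omega
        · -- only c ~ t2 : deg c ≤ 2
          exfalso
          have hsub : G.neighborFinset c ⊆ {x, t2} := by
            intro v hv
            have hcv : G.Adj c v := by rwa [SimpleGraph.mem_neighborFinset] at hv
            have := hNcsub hv
            rcases Finset.mem_insert.mp this with h | h
            · simp [h]
            · rcases Finset.mem_insert.mp h with h' | h'
              · exact absurd (h' ▸ hcv) h1
              · rcases Finset.mem_insert.mp h' with h'' | h''
                · exact absurd (h'' ▸ hcv) h2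
                · simp [h'']
          have h := Finset.card_le_card hsub
          have h2' : ({x, t2} : Finset V).card ≤ 2 := by
            apply le_trans (Finset.card_insert_le _ _); simp
          rw [G.card_neighborFinset_eq_degree, hdegc3] at h
          omega
        · -- c adjacent to none of u, t1, t2 : deg c ≤ 1
          exfalso
          have hsub : G.neighborFinset c ⊆ {x} := by
            intro v hv
            have hcv : G.Adj c v := by rwa [SimpleGraph.mem_neighborFinset] at hv
            have := hNcsub hv
            rcases Finset.mem_insert.mp this with h | h
            · simp [h]
            · rcases Finset.mem_insert.mp h with h' | h'
              · exact absurd (h' ▸ hcv) h1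
              · rcases Finset.mem_insert.mp h' with h'' | h''
                · exact absurd (h'' ▸ hcv) h2
                · exact absurd ((Finset.mem_singleton.mp h'') ▸ hcv) h3
          have h := Finset.card_le_card hsub
          rw [G.card_neighborFinset_eq_degree, hdegc3, Finset.card_singleton] at h
          omega

end core

theorem max_degree_ne_n_even {V : Type*} [Fintype V] [DecidableEq V]
    (n : ℕ) (hn : 3 ≤ n) (G : SimpleGraph V) [DecidableRel G.Adj]
    (hcard : Fintype.card V = 2 * n)
    (hedges : n ^ 2 - 1 ≤ G.edgeFinset.card)
    (hpath : ¬ HasEqPath3 G)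
    (hβ : ∀ a b : V, a ≠ b → G.degree a = G.degree b → G.degree a ≤ n) :
    G.maxDegree ≠ n := by
  intro hmax
  exact hpath (core n hn G hcard hedges (fun v => hmax ▸ G.degree_le_maxDegree v))
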